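/- arXiv:2604.18941 — 2 statements merged into one kernel-verified Lean document; each statement's English description precedes it below -/
import Mathlib

section
/- Conversely, suppose V : [0,T]×ℝ^n → ℝ is C^{1,2} and satisfies −∂ₜV = c + (∇V)ᵀ f + ½ tr(D ∇²V) − ½ (∇V)ᵀ B Rₐ⁻¹ Bᵀ ∇V with D = λ B Rₐ⁻¹ Bᵀ and λ > 0. Then Ψ := exp(−V/λ) is strictly positive and satisfies the linear PDE −∂ₜΨ = −(c/λ)Ψ + (∇Ψ)ᵀ f + ½ tr(D ∇²Ψ). -/
open Matrix

/-- Directional (partial) derivative of a function on `ℝⁿ` along the `i`-th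
coordinate direction. -/
noncomputable def pd {n : ℕ} (i : Fin n) (g : (Fin n → ℝ) → ℝ) (μ : Fin n → ℝ) : ℝ :=
  fderiv ℝ g μ (Pi.single i 1)

lemma pdExp {n : ℕ} (lam : ℝ) (V : (Fin n → ℝ) → ℝ) (hV : ContDiff ℝ 2 V)
    (i : Fin n) (μ : Fin n → ℝ) :
    pd i (fun x => Real.exp (-(V x) / lam)) μ
      = Real.exp (-(V μ) / lam) * (-(pd i V μ) / lam) := by
  have h1 : HasFDerivAt V (fderiv ℝ V μ) μ :=
    ((hV.differentiable (by norm_num)) μ).hasFDerivAt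
  have h2 : HasFDerivAt (fun x => -(V x) / lam) (lam⁻¹ • (-fderiv ℝ V μ)) μ := by
    simpa [div_eq_inv_mul] using h1.neg.const_mul lam⁻¹
  have h3 := h2.exp
  rw [pd, h3.fderiv]
  simp [pd, mul_div_assoc, div_eq_inv_mul]

lemma pdV_contDiff {n : ℕ} (V : (Fin n → ℝ) → ℝ) (hV : ContDiff ℝ 2 V) (j : Fin n) :
    ContDiff ℝ 1 (fun x => pd j V x) := by
  have h : (fun x => pd j V x)
      = (⇑(ContinuousLinearMap.apply ℝ ℝ (Pi.single j (1:ℝ))) ∘ fderiv ℝ V) := rfl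
  rw [h]
  exact (ContinuousLinearMap.apply ℝ ℝ (Pi.single j (1:ℝ))).contDiff.comp
    (hV.fderiv_right (m := 1) (by norm_num))

lemma pd_mul {n : ℕ} (g h : (Fin n → ℝ) → ℝ) (μ : Fin n → ℝ)
    (hg : DifferentiableAt ℝ g μ) (hh : DifferentiableAt ℝ h μ) (i : Fin n) :
    pd i (fun x => g x * h x) μ = pd i g μ * h μ + g μ * pd i h μ := by
  rw [pd, fderiv_fun_mul hg hh]
  simp [pd]
  ring

lemma pd_neg_div {n : ℕ} (lam : ℝ) (w : (Fin n → ℝ) → ℝ) (μ : Fin n → ℝ)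
    (hw : DifferentiableAt ℝ w μ) (i : Fin n) :
    pd i (fun x => -(w x) / lam) μ = -(pd i w μ) / lam := by
  have : (fun x => -(w x) / lam) = fun x => (-lam⁻¹) * w x := by funext x; ring
  rw [this, pd, fderiv_const_mul hw]
  simp [pd]
  ring

lemma pd2Exp {n : ℕ} (lam : ℝ) (hlam : lam ≠ 0) (V : (Fin n → ℝ) → ℝ) (hV : ContDiff ℝ 2 V)
    (i j : Fin n) (μ : Fin n → ℝ) :
    pd i (fun x => pd j (fun y => Real.exp (-(V y) / lam)) x) μ
      = Real.exp (-(V μ) / lam) *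
          (pd i V μ * pd j V μ / lam ^ 2 - pd i (fun x => pd j V x) μ / lam) := by
  have hrw : (fun x => pd j (fun y => Real.exp (-(V y) / lam)) x)
      = fun x => Real.exp (-(V x) / lam) * (-(pd j V x) / lam) := by
    funext x; exact pdExp lam V hV j x
  rw [hrw]
  have hd : DifferentiableAt ℝ (fun x => -(V x) / lam) μ := by
    simpa [div_eq_mul_inv] using (((hV.differentiable (by norm_num)) μ).neg).mul_const lam⁻¹
  have hE : DifferentiableAt ℝ (fun x => Real.exp (-(V x) / lam)) μ := hd.exp
  have hw : DifferentiableAt ℝ (fun x => pd j V x) μ :=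
    ((pdV_contDiff V hV j).differentiable one_ne_zero) μ
  have hh : DifferentiableAt ℝ (fun x => -(pd j V x) / lam) μ := (by
    simpa [div_eq_mul_inv] using hw.neg.mul_const lam⁻¹)
  rw [pd_mul _ _ μ hE hh i, pdExp lam V hV i μ, pd_neg_div lam _ μ hw i]
  field_simp
  ring

lemma derivExp (lam : ℝ) (g : ℝ → ℝ) (hg : Differentiable ℝ g) (t : ℝ) :
    deriv (fun s => Real.exp (-(g s) / lam)) t
      = Real.exp (-(g t) / lam) * (-(deriv g t) / lam) := by
  have := (((hg t).hasDerivAt.neg.div_const lam).exp).deriv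
  simpa [mul_div_assoc] using this

/-- Conversely: if `V` is `C^{1,2}` and solves the nonlinear HJB
`−∂ₜV = c + (∇V)ᵀ f + ½ tr(D ∇²V) − ½ (∇V)ᵀ B Rₐ⁻¹ Bᵀ ∇V` with
`D = λ B Rₐ⁻¹ Bᵀ`, `λ > 0`, then `Ψ := exp(−V/λ)` is strictly positive and
solves the linear PDE `−∂ₜΨ = −(c/λ)Ψ + (∇Ψ)ᵀ f + ½ tr(D ∇²Ψ)`. -/
theorem stmt4 {n ℓ : ℕ} (T lam : ℝ) (hT : 0 < T) (hlam : 0 < lam)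
    (Ra : Matrix (Fin ℓ) (Fin ℓ) ℝ) (hRa : Ra.PosDef)
    (B : Matrix (Fin n) (Fin ℓ) ℝ)
    (D : Matrix (Fin n) (Fin n) ℝ) (hD : D = lam • (B * Ra⁻¹ * Bᵀ))
    (c : ℝ → (Fin n → ℝ) → ℝ) (f : (Fin n → ℝ) → (Fin n → ℝ))
    (V : ℝ → (Fin n → ℝ) → ℝ)
    (hreg_space : ∀ t, ContDiff ℝ 2 (V t))
    (hreg_time : ∀ μ, Differentiable ℝ (fun t => V t μ))
    (hHJB : ∀ t ∈ Set.Icc (0:ℝ) T, ∀ μ,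
      -(deriv (fun s => V s μ) t) =
        c t μ
        + (∑ i, pd i (V t) μ * f μ i)
        + (1/2) * (∑ i, ∑ j, D i j * pd i (fun x => pd j (V t) x) μ)
        - (1/2) * (∑ i, ∑ j, pd i (V t) μ * (B * Ra⁻¹ * Bᵀ) i j * pd j (V t) μ))
    (Ψ : ℝ → (Fin n → ℝ) → ℝ)
    (hΨ : Ψ = fun t μ => Real.exp (-(V t μ) / lam)) :
    (∀ t μ, 0 < Ψ t μ) ∧
    ∀ t ∈ Set.Icc (0:ℝ) T, ∀ μ,
      -(deriv (fun s => Ψ s μ) t) =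
        -(c t μ / lam) * Ψ t μ
        + (∑ i, pd i (Ψ t) μ * f μ i)
        + (1/2) * ∑ i, ∑ j, D i j * pd i (fun x => pd j (Ψ t) x) μ := by
  subst hΨ hD
  refine ⟨fun t μ => Real.exp_pos _, fun t ht μ => ?_⟩
  have key := hHJB t ht μ
  beta_reduce
  rw [derivExp lam (fun s => V s μ) (hreg_time μ) t]
  simp only [pd2Exp lam hlam.ne' (V t) (hreg_space t)]
  simp only [pdExp lam (V t) (hreg_space t), Matrix.smul_apply, smul_eq_mul]
  simp only [Matrix.smul_apply, smul_eq_mul] at key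
  set E := Real.exp (-V t μ / lam) with hE
  have e1 : ∑ i, E * (-pd i (V t) μ / lam) * f μ i
      = -(E / lam) * ∑ i, pd i (V t) μ * f μ i := by
    rw [Finset.mul_sum]
    refine Finset.sum_congr rfl fun i _ => by ring
  have e2 : ∑ i, ∑ j, lam * (B * Ra⁻¹ * Bᵀ) i j *
        (E * (pd i (V t) μ * pd j (V t) μ / lam ^ 2 - pd i (fun x => pd j (V t) x) μ / lam))
      = (E / lam) * (∑ i, ∑ j, pd i (V t) μ * (B * Ra⁻¹ * Bᵀ) i j * pd j (V t) μ)
        - (E / lam) * (∑ i, ∑ j, lam * (B * Ra⁻¹ * Bᵀ) i j * pd i (fun x => pd j (V t) x) μ) := by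
    rw [Finset.mul_sum, Finset.mul_sum, ← Finset.sum_sub_distrib]
    refine Finset.sum_congr rfl fun i _ => ?_
    rw [Finset.mul_sum, Finset.mul_sum, ← Finset.sum_sub_distrib]
    refine Finset.sum_congr rfl fun j _ => ?_
    field_simp
  linear_combination (-1 : ℝ) * e1 + (-(1/2) : ℝ) * e2 + (-(E / lam)) * key
end

section
/- For Σ positive definite and u such that D(Σ,u) = λ B Rₐ⁻¹ Bᵀ (matching holds), the range (column space) of B Rₐ⁻¹ Bᵀ is contained in the range of Σ C(u)ᵀ, and hence rank(B) ≤ rank(C(u)). -/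
open Matrix

/-- If matching holds, `D(Σ,u) = Σ C(u)ᵀ R₀⁻¹ C(u) Σ = λ B Rₐ⁻¹ Bᵀ`, then the
column space of `B Rₐ⁻¹ Bᵀ` is contained in that of `Σ C(u)ᵀ`, and hence
`rank B ≤ rank C(u)`. -/
theorem stmt19 {n p ℓ ℓs : ℕ} (S : Matrix (Fin n) (Fin n) ℝ) (hS : S.PosDef)
    (R0 : Matrix (Fin p) (Fin p) ℝ) (hR0 : R0.PosDef)
    (Ra : Matrix (Fin ℓ) (Fin ℓ) ℝ) (hRa : Ra.PosDef)
    (B : Matrix (Fin n) (Fin ℓ) ℝ) (lam : ℝ) (hlam : 0 < lam)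
    (C : (Fin ℓs → ℝ) → Matrix (Fin p) (Fin n) ℝ) (u : Fin ℓs → ℝ)
    (hmatch : S * (C u)ᵀ * R0⁻¹ * (C u) * S = lam • (B * Ra⁻¹ * Bᵀ)) :
    LinearMap.range (B * Ra⁻¹ * Bᵀ).mulVecLin ≤
      LinearMap.range (S * (C u)ᵀ).mulVecLin ∧
    B.rank ≤ (C u).rank := by
  have hrange : LinearMap.range (B * Ra⁻¹ * Bᵀ).mulVecLin ≤
      LinearMap.range (S * (C u)ᵀ).mulVecLin := by
    rintro x ⟨y, rfl⟩
    refine ⟨lam⁻¹ • (R0⁻¹ * C u * S).mulVec y, ?_⟩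
    have h1 : (S * (C u)ᵀ).mulVec ((R0⁻¹ * C u * S).mulVec y)
        = (S * (C u)ᵀ * R0⁻¹ * (C u) * S).mulVec y := by
      simp only [mulVec_mulVec, Matrix.mul_assoc]
    simp only [mulVecLin_apply, mulVec_smul, h1, hmatch, smul_mulVec,
      smul_smul, inv_mul_cancel₀ hlam.ne', one_smul]
  refine ⟨hrange, ?_⟩
  -- square root of Ra⁻¹
  have hRaInv : (Ra⁻¹).PosDef := hRa.inv
  set M : Matrix (Fin ℓ) (Fin ℓ) ℝ := (open scoped MatrixOrder in CFC.sqrt (Ra⁻¹)) with hMdef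
  have hMM : M * M = Ra⁻¹ := by
    open scoped MatrixOrder in exact CFC.sqrt_mul_sqrt_self _ hRaInv.posSemidef.nonneg
  have hMT : Mᵀ = M := by
    have := (open scoped MatrixOrder in (CFC.sqrt_nonneg (Ra⁻¹)).posSemidef).isHermitian
    rw [hMdef]
    exact (conjTranspose_eq_transpose_of_trivial _).symm.trans this
  have hMdet : IsUnit M.det := by
    have hdet : M.det * M.det = (Ra⁻¹).det := by rw [← det_mul, hMM]
    have : (Ra⁻¹).det ≠ 0 := hRaInv.det_pos.ne'
    refine isUnit_iff_ne_zero.mpr fun h => this ?_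
    rw [← hdet, h, mul_zero]
  have hBM : (B * M) * (B * M)ᵀ = B * Ra⁻¹ * Bᵀ := by
    rw [transpose_mul, hMT, ← hMM]; simp only [Matrix.mul_assoc]
  have hrankB : (B * Ra⁻¹ * Bᵀ).rank = B.rank := by
    rw [← hBM, rank_self_mul_transpose, rank_mul_eq_left_of_isUnit_det M B hMdet]
  have hle : (B * Ra⁻¹ * Bᵀ).rank ≤ (S * (C u)ᵀ).rank :=
    Submodule.finrank_mono hrange
  have hSdet : IsUnit S.det := hS.isUnit.map detMonoidHom
  calc B.rank = (B * Ra⁻¹ * Bᵀ).rank := hrankB.symm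
    _ ≤ (S * (C u)ᵀ).rank := hle
    _ = ((C u)ᵀ).rank := rank_mul_eq_right_of_isUnit_det S (C u)ᵀ hSdet
    _ = (C u).rank := rank_transpose _
end
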